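/- arXiv:2503.11397 — 2 statements merged into one kernel-verified Lean document; each statement's English description precedes it below -/
import Mathlib

section
/- For every dimension d ≥ 1, every degree ℓ ∈ ℕ, and every θ ∈ (0,1], there exists a constant C > 0, depending only on d, ℓ and θ, such that for every d-variate real polynomial p of total degree at most ℓ, all x, y ∈ ℝ^d, all radii R > 0, ρ > 0 with θR ≤ ρ and closedBall(y,ρ) ⊆ closedBall(x,R), every unit vector n ∈ ℝ^d and every c ∈ ℝ, letting F := {z ∈ closedBall(x,R) : ⟪z,n⟫ = c}, one has ∫_F p(z)² dμ^{d−1}(z) ≤ C R⁻¹ ∫_{B(y,ρ)} p(z)² dz. (Trace of an extended polynomial on a flat face of a neighboring ill-cut cell controlled by the L² norm on the ball contained in the well-cut sub-cell.) -/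
/-!
Rescaling the ball `B(y, ρ)` to the unit ball turns the face into a subset of the ball of radius
`2 / θ` about the origin. On the finite-dimensional space of polynomials of degree at most `ℓ`, the
`L²` norm on the unit ball is a norm, so by compactness of its unit sphere it dominates the supremum
on any fixed compact set; undoing the rescaling, `p(z)² ≲ ρ⁻ᵈ ∫_{B(y,ρ)} p²` on the face. The face
is a piece of hyperplane of diameter at most `2R`, of `(d-1)`-dimensional measure `≲ R^{d-1}`, and
`R^{d-1} ρ⁻ᵈ ≤ θ⁻ᵈ R⁻¹`.
-/

open MeasureTheory Metric Module MvPolynomial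

section FiniteFamily

variable {X ι : Type*} [TopologicalSpace X] [MeasurableSpace X] [OpensMeasurableSpace X]
  [Fintype ι]

theorem exists_sq_le_mul_setIntegral_sq (μ : Measure X) [IsLocallyFiniteMeasure μ]
    {f : ι → X → ℝ} (hf : ∀ i, Continuous (f i)) {K S : Set X} (hK : IsCompact K)
    (hS : IsCompact S) (hpos : ∀ a : ι → ℝ, a ≠ 0 → 0 < ∫ u in S, (∑ i, a i * f i u) ^ 2 ∂μ) :
    ∃ C, ∀ a : ι → ℝ, ∀ u ∈ K,
      (∑ i, a i * f i u) ^ 2 ≤ C * ∫ u in S, (∑ i, a i * f i u) ^ 2 ∂μ := by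
  set F : (ι → ℝ) → X → ℝ := fun a u => ∑ i, a i * f i u
  have hF : Continuous (Function.uncurry F) := by fun_prop
  set G : (ι → ℝ) → ℝ := fun a => ∫ u in S, F a u ^ 2 ∂μ
  have hG : Continuous G :=
    continuous_parametric_integral_of_continuous (f := fun a u => F a u ^ 2) (by fun_prop) hS
  have hF_smul (t : ℝ) (a : ι → ℝ) (u : X) : F (t • a) u = t * F a u := by
    simp only [F, Pi.smul_apply, smul_eq_mul, mul_assoc, ← Finset.mul_sum]
  have hG_smul (t : ℝ) (a : ι → ℝ) : G (t • a) = t ^ 2 * G a := by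
    simp only [G, hF_smul, mul_pow, integral_const_mul]
  -- By homogeneity it suffices to bound `F a u ^ 2 / G a` on the compact set `sphere 0 1 ×ˢ K`.
  obtain ⟨C, hC⟩ := ((isCompact_sphere (0 : ι → ℝ) 1).prod hK).exists_bound_of_continuousOn
    (f := fun q : (ι → ℝ) × X => F q.1 q.2 ^ 2 / G q.1) <|
      (hF.pow 2).continuousOn.div (hG.comp continuous_fst).continuousOn fun q hq =>
        (hpos q.1 (ne_zero_of_mem_unit_sphere ⟨q.1, hq.1⟩)).ne'
  refine ⟨C, fun a u hu => ?_⟩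
  obtain rfl | ha := eq_or_ne a 0
  · simp
  have ht : ‖a‖ ≠ 0 := norm_ne_zero_iff.2 ha
  set b := ‖a‖⁻¹ • a
  have hb : b ∈ sphere (0 : ι → ℝ) 1 := by
    simp [b, norm_smul, ht]
  have hab : a = ‖a‖ • b := by simp [b, smul_smul, ht]
  have hbound : F b u ^ 2 ≤ C * G b := by
    have := (le_abs_self _).trans (hC (b, u) ⟨hb, hu⟩)
    rwa [div_le_iff₀ (hpos b (ne_zero_of_mem_unit_sphere ⟨b, hb⟩))] at this
  show F a u ^ 2 ≤ C * G a
  rw [hab, hF_smul, hG_smul, mul_pow, mul_left_comm]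
  exact mul_le_mul_of_nonneg_left hbound (sq_nonneg _)

end FiniteFamily

theorem setIntegral_ball_comp_add_smul {E F : Type*} [NormedAddCommGroup E] [NormedSpace ℝ E]
    [MeasurableSpace E] [BorelSpace E] [FiniteDimensional ℝ E] (μ : Measure E)
    [μ.IsAddHaarMeasure] [NormedAddCommGroup F] [NormedSpace ℝ F] (f : E → F) (y : E)
    {ρ : ℝ} (hρ : 0 < ρ) (r : ℝ) :
    ∫ u in ball 0 r, f (y + ρ • u) ∂μ =
      (ρ ^ finrank ℝ E)⁻¹ • ∫ z in ball y (ρ * r), f z ∂μ := by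
  rw [Measure.setIntegral_comp_smul_of_pos μ (fun v => f (y + v)) _ hρ, _root_.smul_ball hρ.ne',
    smul_zero, Real.norm_of_nonneg hρ.le,
    ← (measurePreserving_add_left μ y).setIntegral_image_emb (measurableEmbedding_addLeft y)]
  simp

theorem addHaar_closedBall_ae_eq_ball {E : Type*} [NormedAddCommGroup E] [NormedSpace ℝ E]
    [MeasurableSpace E] [BorelSpace E] [FiniteDimensional ℝ E] (μ : Measure E)
    [μ.IsAddHaarMeasure] (x : E) {r : ℝ} (hr : r ≠ 0) : closedBall x r =ᵐ[μ] ball x r := by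
  rw [← ball_union_sphere]
  exact union_ae_eq_left_of_ae_eq_empty (ae_eq_empty.2 (Measure.addHaar_sphere_of_ne_zero μ x hr))

namespace MvPolynomial

theorem totalDegree_eval₂_C_le {σ τ R : Type*} [CommSemiring R] (p : MvPolynomial σ R)
    {g : σ → MvPolynomial τ R} (hg : ∀ i, (g i).totalDegree ≤ 1) :
    (eval₂ C g p).totalDegree ≤ p.totalDegree := by
  rw [eval₂_eq]
  refine (totalDegree_finsetSum _ _).trans (Finset.sup_le fun s hs => ?_)
  calc (C (coeff s p) * ∏ i ∈ s.support, g i ^ s i).totalDegree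
      ≤ ∑ i ∈ s.support, (g i ^ s i).totalDegree := by
        refine (totalDegree_mul _ _).trans ?_
        rw [totalDegree_C, zero_add]
        exact totalDegree_finsetProd _ _
    _ ≤ ∑ i ∈ s.support, s i := Finset.sum_le_sum fun i _ =>
        (totalDegree_pow _ _).trans (by simpa using Nat.mul_le_mul_left (s i) (hg i))
    _ ≤ p.totalDegree := le_totalDegree hs

variable {d : ℕ}

theorem eq_zero_of_eval_eq_zero_on_isOpen {p : MvPolynomial (Fin d) ℝ}
    {U : Set (EuclideanSpace ℝ (Fin d))} (hU : IsOpen U) (hne : U.Nonempty)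
    (h : ∀ z ∈ U, eval (fun i => z i) p = 0) : p = 0 := by
  obtain ⟨z₀, hz₀⟩ := hne
  have hzero := (AnalyticOnNhd.eval_linearMap
    (WithLp.linearEquiv 2 ℝ (Fin d → ℝ)).toLinearMap p).eqOn_zero_of_preconnected_of_eventuallyEq_zero
    isPreconnected_univ (Set.mem_univ z₀) (Filter.eventuallyEq_of_mem (hU.mem_nhds hz₀) h)
  exact funext fun w => by simpa using hzero (Set.mem_univ (WithLp.toLp 2 w))

theorem setIntegral_sq_eval_pos {p : MvPolynomial (Fin d) ℝ} (hp : p ≠ 0)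
    {S : Set (EuclideanSpace ℝ (Fin d))} (hS : IsCompact S) (hS' : (interior S).Nonempty) :
    0 < ∫ z in S, eval (fun i => z i) p ^ 2 := by
  have hcont : Continuous fun z : EuclideanSpace ℝ (Fin d) => eval (fun i => z i) p ^ 2 :=
    ((continuous_eval p).comp (PiLp.continuous_ofLp 2 _)).pow 2
  rw [setIntegral_pos_iff_support_of_nonneg_ae (.of_forall fun _ => sq_nonneg _)
    (hcont.continuousOn.integrableOn_compact hS)]
  have hopen : IsOpen (Function.support (fun z : EuclideanSpace ℝ (Fin d) =>
      eval (fun i => z i) p ^ 2) ∩ interior S) :=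
    (isOpen_ne_fun hcont continuous_const).inter isOpen_interior
  refine (hopen.measure_pos volume ?_).trans_le (measure_mono
    (Set.inter_subset_inter_right _ interior_subset))
  by_contra hempty
  refine hp (eq_zero_of_eval_eq_zero_on_isOpen isOpen_interior hS' fun z hz => ?_)
  by_contra hne
  exact hempty ⟨z, pow_ne_zero 2 hne, hz⟩

end MvPolynomial

theorem exists_sq_eval_le_mul_setIntegral_sq (d ℓ : ℕ) {K S : Set (EuclideanSpace ℝ (Fin d))}
    (hK : IsCompact K) (hS : IsCompact S) (hS' : (interior S).Nonempty) :
    ∃ C, ∀ p : MvPolynomial (Fin d) ℝ, p.totalDegree ≤ ℓ → ∀ u ∈ K,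
      eval (fun i => u i) p ^ 2 ≤ C * ∫ z in S, eval (fun i => z i) p ^ 2 := by
  set b := finBasis ℝ (restrictTotalDegree (Fin d) ℝ ℓ)
  have heval (a : Fin _ → ℝ) (z : EuclideanSpace ℝ (Fin d)) :
      eval (fun i => z i) (b.equivFun.symm a : MvPolynomial (Fin d) ℝ) =
        ∑ j, a j * eval (fun i => z i) (b j : MvPolynomial (Fin d) ℝ) := by
    simp [Module.Basis.equivFun_symm_apply]
  obtain ⟨C, hC⟩ := exists_sq_le_mul_setIntegral_sq volume
    (f := fun j z => eval (fun i => z i) (b j : MvPolynomial (Fin d) ℝ))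
    (fun j => (continuous_eval _).comp (PiLp.continuous_ofLp 2 _)) hK hS fun a ha => by
      simpa only [heval] using setIntegral_sq_eval_pos (p := (b.equivFun.symm a : _))
        (by rwa [Ne, Submodule.coe_eq_zero, LinearEquiv.map_eq_zero_iff]) hS hS'
  refine ⟨C, fun p hp u hu => ?_⟩
  have hp_eq : p = (b.equivFun.symm (b.equivFun ⟨p, (mem_restrictTotalDegree _ _ _).2 hp⟩) :
      MvPolynomial (Fin d) ℝ) := by simp
  rw [hp_eq]
  simpa only [heval] using hC _ u hu

theorem exists_sq_eval_le_mul_setIntegral_ball_sq (d ℓ : ℕ) (r : ℝ) :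
    ∃ C, 0 < C ∧ ∀ p : MvPolynomial (Fin d) ℝ, p.totalDegree ≤ ℓ →
      ∀ (y : EuclideanSpace ℝ (Fin d)) (ρ : ℝ), 0 < ρ → ∀ z ∈ closedBall y (ρ * r),
        eval (fun i => z i) p ^ 2 ≤ C * (ρ ^ d)⁻¹ * ∫ w in ball y ρ, eval (fun i => w i) p ^ 2 := by
  obtain ⟨A, hA⟩ := exists_sq_eval_le_mul_setIntegral_sq d ℓ (isCompact_closedBall 0 r)
    (isCompact_closedBall 0 1) ⟨0, by simp [interior_closedBall]⟩
  refine ⟨max A 1, by positivity, fun p hp y ρ hρ z hz => ?_⟩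
  set q := eval₂ C (fun i => C (y i) + C ρ * X i) p
  have hq : q.totalDegree ≤ ℓ := by
    refine (totalDegree_eval₂_C_le p fun i => ?_).trans hp
    refine (totalDegree_add _ _).trans (max_le (by simp) ?_)
    exact (totalDegree_mul _ _).trans (by simp)
  have heval (v : EuclideanSpace ℝ (Fin d)) :
      eval (fun i => v i) q = eval (fun i => (y + ρ • v) i) p := by
    simp [q, ← eval_assoc, Function.comp_def]
  have hint : ∫ w in closedBall (0 : EuclideanSpace ℝ (Fin d)) 1, eval (fun i => w i) q ^ 2 =
      (ρ ^ d)⁻¹ * ∫ w in ball y ρ, eval (fun i => w i) p ^ 2 := by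
    rw [setIntegral_congr_set (addHaar_closedBall_ae_eq_ball volume 0 one_ne_zero)]
    simp only [heval]
    rw [setIntegral_ball_comp_add_smul volume (fun w => eval (fun i => w i) p ^ 2) y hρ,
      finrank_euclideanSpace_fin, mul_one, smul_eq_mul]
  set u := ρ⁻¹ • (z - y)
  have hu : u ∈ closedBall 0 r := by
    rw [mem_closedBall, dist_eq_norm] at hz
    rw [mem_closedBall_zero_iff, norm_smul, norm_inv, Real.norm_of_nonneg hρ.le,
      inv_mul_le_iff₀ hρ]
    exact hz
  have hzu : z = y + ρ • u := by simp [u, smul_smul, hρ.ne']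
  have hI : 0 ≤ ∫ w in ball y ρ, eval (fun i => w i) p ^ 2 :=
    setIntegral_nonneg measurableSet_ball fun _ _ => sq_nonneg _
  calc eval (fun i => z i) p ^ 2 = eval (fun i => u i) q ^ 2 := by rw [heval, ← hzu]
    _ ≤ A * ((ρ ^ d)⁻¹ * ∫ w in ball y ρ, eval (fun i => w i) p ^ 2) := hint ▸ hA q hq u hu
    _ ≤ max A 1 * (ρ ^ d)⁻¹ * ∫ w in ball y ρ, eval (fun i => w i) p ^ 2 := by
      rw [← mul_assoc]; gcongr; exact le_max_left _ _

instance (m : ℕ) : (μH[m] : Measure (EuclideanSpace ℝ (Fin m))).IsAddHaarMeasure := by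
  simpa using isAddHaarMeasure_hausdorffMeasure (E := EuclideanSpace ℝ (Fin m))

theorem hausdorffMeasure_closedBall_inter_hyperplane_le {E : Type*} [NormedAddCommGroup E]
    [InnerProductSpace ℝ E] [MeasurableSpace E] [BorelSpace E] {m : ℕ}
    (hE : finrank ℝ E = m + 1) (x : E) {R : ℝ} (hR : 0 ≤ R) {n : E} (hn : n ≠ 0) (c : ℝ) :
    μH[m] {z | z ∈ closedBall x R ∧ inner ℝ z n = c} ≤
      ENNReal.ofReal ((2 * R) ^ m) * μH[m] (ball (0 : EuclideanSpace ℝ (Fin m)) 1) := by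
  rcases Set.eq_empty_or_nonempty {z | z ∈ closedBall x R ∧ inner ℝ z n = c} with hS | ⟨z₀, hz₀⟩
  · rw [hS, measure_empty]
    exact zero_le
  have : FiniteDimensional ℝ E := Module.finite_of_finrank_eq_succ hE
  have : Fact (finrank ℝ E = m + 1) := ⟨hE⟩
  set W := (ℝ ∙ n)ᗮ
  set e : EuclideanSpace ℝ (Fin m) ≃ₗᵢ[ℝ] W := (stdOrthonormalBasis ℝ W).reindex
    (finCongr (Submodule.finrank_orthogonal_span_singleton hn)) |>.repr.symm
  set g : EuclideanSpace ℝ (Fin m) → E := fun w => z₀ + e w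
  have hg : Isometry g :=
    (IsometryEquiv.addLeft z₀).isometry.comp (isometry_subtype_coe.comp e.isometry)
  have hcover : {z | z ∈ closedBall x R ∧ inner ℝ z n = c} ⊆ g '' closedBall 0 (2 * R) := by
    rintro z ⟨hz, hzc⟩
    have hzW : z - z₀ ∈ W := by
      rw [Submodule.mem_orthogonal_singleton_iff_inner_left, inner_sub_left, hzc, hz₀.2, sub_self]
    refine ⟨e.symm ⟨z - z₀, hzW⟩, ?_, by simp [g]⟩
    rw [mem_closedBall_zero_iff, LinearIsometryEquiv.norm_map, Submodule.coe_norm, ← dist_eq_norm,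
      two_mul]
    exact (dist_triangle_right z z₀ x).trans (add_le_add hz hz₀.1)
  calc μH[m] {z | z ∈ closedBall x R ∧ inner ℝ z n = c}
      ≤ μH[m] (g '' closedBall 0 (2 * R)) := measure_mono hcover
    _ = μH[m] (closedBall (0 : EuclideanSpace ℝ (Fin m)) (2 * R)) :=
      hg.hausdorffMeasure_image (.inl m.cast_nonneg) _
    _ = _ := by
      rw [Measure.addHaar_closedBall _ _ (by positivity), finrank_euclideanSpace_fin]

theorem setIntegral_closedBall_inter_hyperplane_le {E : Type*} [NormedAddCommGroup E]
    [InnerProductSpace ℝ E] [MeasurableSpace E] [BorelSpace E] {m : ℕ}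
    (hE : finrank ℝ E = m + 1) (x : E) {R : ℝ} (hR : 0 ≤ R) {n : E} (hn : n ≠ 0) (c : ℝ)
    {f : E → ℝ} {M : ℝ} (hM : 0 ≤ M)
    (hf : ∀ z ∈ {z | z ∈ closedBall x R ∧ inner ℝ z n = c}, ‖f z‖ ≤ M) :
    ∫ z in {z | z ∈ closedBall x R ∧ inner ℝ z n = c}, f z ∂μH[m] ≤
      M * ((2 * R) ^ m * (μH[m] (ball (0 : EuclideanSpace ℝ (Fin m)) 1)).toReal) := by
  have hS := hausdorffMeasure_closedBall_inter_hyperplane_le hE x hR hn c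
  have hfin : ENNReal.ofReal ((2 * R) ^ m) * μH[m] (ball (0 : EuclideanSpace ℝ (Fin m)) 1) < ⊤ :=
    ENNReal.mul_lt_top ENNReal.ofReal_lt_top measure_ball_lt_top
  have hS_toReal := ENNReal.toReal_mono hfin.ne hS
  rw [ENNReal.toReal_mul, ENNReal.toReal_ofReal (by positivity)] at hS_toReal
  exact (le_abs_self _).trans <| (norm_setIntegral_le_of_norm_le_const (hS.trans_lt hfin) hf).trans
    (mul_le_mul_of_nonneg_left hS_toReal hM)

/-- Trace of an extended polynomial on a flat face controlled by the L² norm on the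
small ball contained in the well-cut sub-cell. -/
theorem polynomial_extension_trace_flat_face_bound
    (d ℓ : ℕ) (hd : 1 ≤ d) (θ : ℝ) (hθ : θ ∈ Set.Ioc (0 : ℝ) 1) :
    ∃ C : ℝ, 0 < C ∧
      ∀ (p : MvPolynomial (Fin d) ℝ), p.totalDegree ≤ ℓ →
        ∀ (x y : EuclideanSpace ℝ (Fin d)) (R ρ : ℝ), 0 < R → 0 < ρ →
          θ * R ≤ ρ → closedBall y ρ ⊆ closedBall x R →
          ∀ (n : EuclideanSpace ℝ (Fin d)), ‖n‖ = 1 → ∀ (c : ℝ),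
            (∫ z in {z : EuclideanSpace ℝ (Fin d) |
                z ∈ closedBall x R ∧ (inner ℝ z n : ℝ) = c},
                (MvPolynomial.eval (fun i => z i) p) ^ 2
                ∂(MeasureTheory.Measure.hausdorffMeasure ((d : ℝ) - 1))) ≤
              C * R⁻¹ * ∫ z in ball y ρ, (MvPolynomial.eval (fun i => z i) p) ^ 2 := by
  obtain ⟨m, rfl⟩ := Nat.exists_eq_add_of_le' hd
  obtain ⟨hθ₀, -⟩ := hθ
  obtain ⟨A, hA, hpoint⟩ := exists_sq_eval_le_mul_setIntegral_ball_sq (m + 1) ℓ (2 / θ)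
  set K := (μH[m] (ball (0 : EuclideanSpace ℝ (Fin m)) 1)).toReal
  have hK : 0 < K := ENNReal.toReal_pos (measure_ball_pos _ _ one_pos).ne' measure_ball_lt_top.ne
  refine ⟨A * 2 ^ m * K / θ ^ (m + 1), by positivity, fun p hp x y R ρ hR hρ hθR hsub n hn c => ?_⟩
  rw [show ((m + 1 : ℕ) : ℝ) - 1 = m by push_cast; ring]
  set I := ∫ z in ball y ρ, eval (fun i => z i) p ^ 2
  have hI : 0 ≤ I := setIntegral_nonneg measurableSet_ball fun _ _ => sq_nonneg _
  have hy : y ∈ closedBall x R := hsub (mem_closedBall_self hρ.le)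
  have hface : ∀ z ∈ {z | z ∈ closedBall x R ∧ inner ℝ z n = c},
      ‖eval (fun i => z i) p ^ 2‖ ≤ A * (ρ ^ (m + 1))⁻¹ * I := by
    rintro z ⟨hz, -⟩
    rw [Real.norm_of_nonneg (sq_nonneg _)]
    refine hpoint p hp y ρ hρ z ?_
    calc dist z y ≤ dist z x + dist y x := dist_triangle_right _ _ _
      _ ≤ 2 * R := by linarith [mem_closedBall.1 hz, mem_closedBall.1 hy]
      _ ≤ ρ * (2 / θ) := by rw [mul_div_assoc', le_div_iff₀ hθ₀]; linarith
  calc _ ≤ A * (ρ ^ (m + 1))⁻¹ * I * ((2 * R) ^ m * K) :=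
        setIntegral_closedBall_inter_hyperplane_le finrank_euclideanSpace_fin x hR.le
          (norm_ne_zero_iff.1 (hn ▸ one_ne_zero)) c (by positivity) hface
    _ ≤ A * ((θ * R) ^ (m + 1))⁻¹ * I * ((2 * R) ^ m * K) := by gcongr
    _ = A * 2 ^ m * K / θ ^ (m + 1) * R⁻¹ * I := by
        field_simp
        ring
end

section
/- For every dimension d ≥ 1, every degree ℓ ∈ ℕ, and every θ ∈ (0,1], there exists a constant C > 0, depending only on d, ℓ and θ, such that for every d-variate real polynomial p of total degree at most ℓ, all x, y ∈ ℝ^d and all radii R > 0, ρ > 0 with θR ≤ ρ and closedBall(y,ρ) ⊆ closedBall(x,R), one has ∫_{B(x,R)} (p(z) − ⟨p⟩_{B(y,ρ)})² dz ≤ C R² ∫_{B(x,R)} ‖∇p(z)‖² dz, where ⟨p⟩_{B(y,ρ)} is the mean value of p over B(y,ρ). (Discrete Poincaré inequality with the mean taken over a sub-ball, the key estimate used to control (I−Π)(φ⁺) in the discrete inverse inequalities of the unfitted HHO analysis.) -/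
/-!
On the unit ball, `p ↦ p - p(0)` and `p ↦ ∇p` are linear maps from the finite-dimensional space
of polynomials of degree `≤ ℓ` into `L²`, and the kernel of the second lies in the kernel of the
first (a polynomial with vanishing gradient is constant on the ball). Hence the first factors
through the second by a map on a finite-dimensional space, which is bounded: this is the
Poincaré inequality on the unit ball. The affine substitution `u ↦ x + R • u` preserves degrees
and transports it to every ball `B(x, R)` with the factor `R²`. Finally, for `ω ⊆ B`, replacing
the constant `p(x)` by the mean over `ω` costs at most the factor `2 (1 + |B| / |ω|)` by Jensen's
inequality, and `|B| / |ω| = (R / ρ)^d ≤ θ⁻ᵈ`.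
-/

open MeasureTheory Metric MvPolynomial Module Pointwise

theorem LinearMap.exists_norm_le_mul_norm_of_ker_le {𝕜 E F G : Type*} [NontriviallyNormedField 𝕜]
    [CompleteSpace 𝕜] [AddCommGroup E] [Module 𝕜 E] [FiniteDimensional 𝕜 E]
    [NormedAddCommGroup F] [NormedSpace 𝕜 F] [NormedAddCommGroup G] [NormedSpace 𝕜 G]
    (f : E →ₗ[𝕜] F) (g : E →ₗ[𝕜] G) (hker : ker g ≤ ker f) :
    ∃ C, 0 < C ∧ ∀ v, ‖f v‖ ≤ C * ‖g v‖ := by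
  let h : range g →L[𝕜] F :=
    { toLinearMap := (ker g).liftQ f hker ∘ₗ g.quotKerEquivRange.symm.toLinearMap
      cont := LinearMap.continuous_of_finiteDimensional _ }
  have hfh : ∀ v, f v = h ⟨g v, mem_range_self g v⟩ := fun v => by
    simp [h, quotKerEquivRange_symm_apply_image]
  refine ⟨‖h‖ + 1, by positivity, fun v => ?_⟩
  calc ‖f v‖ ≤ ‖h‖ * ‖g v‖ := hfh v ▸ h.le_opNorm _
    _ ≤ (‖h‖ + 1) * ‖g v‖ := by gcongr; linarith

noncomputable def LinearMap.toLp {𝕜 V α E : Type*} [NormedField 𝕜] [AddCommGroup V] [Module 𝕜 V]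
    [MeasurableSpace α] {μ : Measure α} [NormedAddCommGroup E] [NormedSpace 𝕜 E] {p : ENNReal}
    [Fact (1 ≤ p)] (Φ : V →ₗ[𝕜] α → E) (hΦ : ∀ v, MemLp (Φ v) p μ) : V →ₗ[𝕜] Lp E p μ where
  toFun v := (hΦ v).toLp
  map_add' v w := by
    rw [← MemLp.toLp_add]
    exact MemLp.toLp_congr _ _ (.of_forall fun a => by simp)
  map_smul' c v := by
    rw [RingHom.id_apply, ← MemLp.toLp_const_smul]
    exact MemLp.toLp_congr _ _ (.of_forall fun a => by simp)

theorem MeasureTheory.MemLp.norm_toLp_two_sq {α E : Type*} [MeasurableSpace α] {μ : Measure α}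
    [NormedAddCommGroup E] [InnerProductSpace ℝ E] {f : α → E} (hf : MemLp f 2 μ) :
    ‖hf.toLp f‖ ^ 2 = ∫ a, ‖f a‖ ^ 2 ∂μ := by
  rw [← real_inner_self_eq_norm_sq, L2.inner_def]
  refine integral_congr_ae (hf.coeFn_toLp.mono fun a ha => ?_)
  simp only [ha, real_inner_self_eq_norm_sq]

theorem Continuous.memLp_restrict_ball {X E : Type*} [PseudoMetricSpace X] [ProperSpace X]
    [MeasurableSpace X] [OpensMeasurableSpace X] {μ : Measure X} [IsFiniteMeasureOnCompacts μ]
    [NormedAddCommGroup E] {f : X → E} (hf : Continuous f) (p : ENNReal) (x : X) (r : ℝ) :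
    MemLp f p (μ.restrict (ball x r)) := by
  obtain ⟨C, hC⟩ := (isCompact_closedBall x r).exists_bound_of_continuousOn hf.continuousOn
  have : IsFiniteMeasure (μ.restrict (ball x r)) :=
    isFiniteMeasure_restrict.2 measure_ball_lt_top.ne
  exact .of_bound hf.aestronglyMeasurable C
    (ae_restrict_of_forall_mem measurableSet_ball fun z hz => hC z (ball_subset_closedBall hz))

theorem setIntegral_sq_sub_setAverage_le {α : Type*} [MeasurableSpace α] {μ : Measure α}
    {s t : Set α} {f : α → ℝ} (hst : s ⊆ t) (hμs : μ s ≠ 0) (hμt : μ t ≠ ⊤)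
    (hf : MemLp f 2 (μ.restrict t)) (c : ℝ) :
    ∫ z in t, (f z - ⨍ w in s, f w ∂μ) ^ 2 ∂μ ≤
      2 * (1 + μ.real t / μ.real s) * ∫ z in t, (f z - c) ^ 2 ∂μ := by
  have : IsFiniteMeasure (μ.restrict t) := isFiniteMeasure_restrict.2 hμt
  have hμs' : μ s ≠ ⊤ := ne_top_of_le_ne_top hμt (measure_mono hst)
  have hs_pos : 0 < μ.real s := ENNReal.toReal_pos hμs hμs'
  set m := ⨍ w in s, f w ∂μ
  set I := ∫ z in t, (f z - c) ^ 2 ∂μ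
  have hfc : MemLp (fun z => f z - c) 2 (μ.restrict t) := hf.sub (memLp_const c)
  have hf_s : IntegrableOn f s μ := IntegrableOn.mono_set (hf.integrable one_le_two) hst
  have hsq_s : IntegrableOn (fun z => (f z - c) ^ 2) s μ :=
    IntegrableOn.mono_set hfc.integrable_sq hst
  have hmean : ⨍ w in s, (f w - c) ∂μ = m - c := by
    simp only [m, setAverage_eq]
    rw [integral_sub hf_s (integrableOn_const hμs'), setIntegral_const, smul_eq_mul, smul_eq_mul,
      smul_eq_mul]
    field_simp
  have hjensen : (m - c) ^ 2 ≤ (μ.real s)⁻¹ * I := calc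
    (m - c) ^ 2 ≤ ⨍ w in s, (f w - c) ^ 2 ∂μ := hmean ▸
      (even_two.convexOn_pow (𝕜 := ℝ)).map_set_average_le (continuousOn_pow 2) isClosed_univ hμs
        hμs' (by simp) (hf_s.sub (integrableOn_const hμs')) hsq_s
    _ ≤ (μ.real s)⁻¹ * I := by
      rw [setAverage_eq, smul_eq_mul]
      gcongr
      exact setIntegral_mono_set hfc.integrable_sq (.of_forall fun _ => sq_nonneg _)
        (.of_forall hst)
  calc ∫ z in t, (f z - m) ^ 2 ∂μ ≤ ∫ z in t, (2 * (f z - c) ^ 2 + 2 * (m - c) ^ 2) ∂μ :=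
        integral_mono (hf.sub (memLp_const m)).integrable_sq
          ((hfc.integrable_sq.const_mul 2).add (integrable_const _)) fun z => by
            nlinarith [sq_nonneg (f z + m - 2 * c)]
    _ = 2 * I + 2 * μ.real t * (m - c) ^ 2 := by
      rw [integral_add (hfc.integrable_sq.const_mul 2) (integrable_const _), integral_const_mul,
        setIntegral_const, smul_eq_mul]
      ring
    _ ≤ 2 * I + 2 * μ.real t * ((μ.real s)⁻¹ * I) := by gcongr
    _ = 2 * (1 + μ.real t / μ.real s) * I := by ring

section Haar

variable {E : Type*} [NormedAddCommGroup E] [NormedSpace ℝ E] [FiniteDimensional ℝ E]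
  [MeasurableSpace E] [BorelSpace E] (μ : Measure E) [μ.IsAddHaarMeasure]

theorem MeasureTheory.Measure.setIntegral_unitBall_comp_add_smul {F : Type*}
    [NormedAddCommGroup F] [NormedSpace ℝ F] (g : E → F) (x : E) {R : ℝ} (hR : 0 < R) :
    ∫ u in ball 0 1, g (x + R • u) ∂μ = (R ^ finrank ℝ E)⁻¹ • ∫ z in ball x R, g z ∂μ := by
  have hscale : R • ball (0 : E) 1 = ball 0 R := by
    rw [_root_.smul_ball hR.ne', smul_zero, Real.norm_of_nonneg hR.le, mul_one]
  have htranslate : (x + ·) ⁻¹' ball x R = ball (0 : E) R := by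
    ext w; simp [mem_ball, dist_eq_norm]
  rw [μ.setIntegral_comp_smul_of_pos (fun w => g (x + w)) _ hR, hscale, ← htranslate,
    (measurePreserving_add_left μ x).setIntegral_preimage_emb
      (Homeomorph.addLeft x).measurableEmbedding]

theorem MeasureTheory.Measure.addHaar_real_ball_div_addHaar_real_ball (x y : E) {r s : ℝ}
    (hr : 0 < r) (hs : 0 < s) :
    μ.real (ball x r) / μ.real (ball y s) = (r / s) ^ finrank ℝ E := by
  have hunit : 0 < μ.real (ball (0 : E) 1) :=
    ENNReal.toReal_pos (measure_ball_pos μ 0 one_pos).ne' measure_ball_lt_top.ne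
  simp only [measureReal_def, μ.addHaar_ball_of_pos _ hr, μ.addHaar_ball_of_pos _ hs,
    ENNReal.toReal_mul, ENNReal.toReal_ofReal (pow_nonneg hr.le _),
    ENNReal.toReal_ofReal (pow_nonneg hs.le _)]
  rw [← measureReal_def, div_pow]
  field_simp

end Haar

theorem gradient_comp_add_smul {E : Type*} [NormedAddCommGroup E] [InnerProductSpace ℝ E]
    [CompleteSpace E] {f : E → ℝ} {x u : E} {R : ℝ} (hf : DifferentiableAt ℝ f (x + R • u)) :
    gradient (fun u => f (x + R • u)) u = R • gradient f (x + R • u) := by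
  have hinner : HasFDerivAt (fun u => x + R • u) (R • ContinuousLinearMap.id ℝ E) u :=
    ((hasFDerivAt_id u).const_smul R).const_add x
  have hdual : InnerProductSpace.toDual ℝ E (R • gradient f (x + R • u)) =
      (InnerProductSpace.toDual ℝ E (gradient f (x + R • u))).comp
        (R • ContinuousLinearMap.id ℝ E) := by
    ext v
    simp
  refine (hasGradientAt_iff_hasFDerivAt.2 ?_).gradient
  rw [hdual]
  exact (hasGradientAt_iff_hasFDerivAt.1 hf.hasGradientAt).comp u hinner

theorem MvPolynomial.totalDegree_bind₁_le {σ τ R : Type*} [CommSemiring R]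
    {f : σ → MvPolynomial τ R} {k : ℕ} (hf : ∀ i, (f i).totalDegree ≤ k)
    (p : MvPolynomial σ R) : (bind₁ f p).totalDegree ≤ k * p.totalDegree := by
  conv_lhs => rw [p.as_sum]
  rw [map_sum]
  refine totalDegree_finsetSum_le fun v hv => ?_
  rw [bind₁_monomial]
  refine (totalDegree_mul _ _).trans ?_
  rw [totalDegree_C, zero_add]
  refine (totalDegree_finsetProd _ _).trans ?_
  calc ∑ i ∈ v.support, (f i ^ v i).totalDegree
      ≤ ∑ i ∈ v.support, k * v i := Finset.sum_le_sum fun i _ =>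
        (totalDegree_pow _ _).trans (by rw [mul_comm]; exact Nat.mul_le_mul_right _ (hf i))
    _ = k * v.sum (fun _ n => n) := (Finset.mul_sum _ _ _).symm
    _ ≤ k * p.totalDegree := Nat.mul_le_mul_left _ (le_totalDegree hv)

namespace MvPolynomial

variable {d : ℕ}

noncomputable def euclideanEval : MvPolynomial (Fin d) ℝ →ₗ[ℝ] EuclideanSpace ℝ (Fin d) → ℝ :=
  LinearMap.pi fun z => (aeval fun i => z i).toLinearMap

theorem euclideanEval_apply (p : MvPolynomial (Fin d) ℝ) (z : EuclideanSpace ℝ (Fin d)) :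
    euclideanEval p z = eval (fun i => z i) p := rfl

theorem contDiff_euclideanEval (p : MvPolynomial (Fin d) ℝ) {n : WithTop ℕ∞} :
    ContDiff ℝ n (euclideanEval p) := by
  have h : euclideanEval p = fun z => eval (fun i => EuclideanSpace.proj i z) p := by
    ext z; rfl
  rw [h]
  exact (AnalyticOnNhd.eval_continuousLinearMap' _ p).contDiff

theorem differentiable_euclideanEval (p : MvPolynomial (Fin d) ℝ) :
    Differentiable ℝ (euclideanEval p) :=
  (contDiff_euclideanEval p (n := 1)).differentiable one_ne_zero

theorem continuous_gradient_euclideanEval (p : MvPolynomial (Fin d) ℝ) :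
    Continuous (gradient (euclideanEval p)) :=
  (InnerProductSpace.toDual ℝ _).symm.continuous.comp
    ((contDiff_euclideanEval p (n := 1)).continuous_fderiv one_ne_zero)

theorem gradient_euclideanEval_add (p q : MvPolynomial (Fin d) ℝ) :
    gradient (euclideanEval (p + q)) = gradient (euclideanEval p) + gradient (euclideanEval q) := by
  ext1 z
  simp only [gradient, map_add, Pi.add_apply]
  rw [fderiv_add (differentiable_euclideanEval p z) (differentiable_euclideanEval q z), map_add]

theorem gradient_euclideanEval_smul (c : ℝ) (p : MvPolynomial (Fin d) ℝ) :
    gradient (euclideanEval (c • p)) = c • gradient (euclideanEval p) := by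
  ext1 z
  simp only [gradient, map_smul, Pi.smul_apply]
  rw [fderiv_const_smul (differentiable_euclideanEval p z), map_smul]

noncomputable def shiftScale (x : EuclideanSpace ℝ (Fin d)) (R : ℝ) :
    MvPolynomial (Fin d) ℝ →ₐ[ℝ] MvPolynomial (Fin d) ℝ :=
  bind₁ fun i => C (x i) + C R * X i

theorem euclideanEval_shiftScale (x : EuclideanSpace ℝ (Fin d)) (R : ℝ)
    (p : MvPolynomial (Fin d) ℝ) :
    euclideanEval (shiftScale x R p) = fun u => euclideanEval p (x + R • u) := by
  ext u
  change aeval _ (bind₁ _ p) = aeval _ p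
  rw [aeval_bind₁]
  simp

theorem totalDegree_shiftScale_le (x : EuclideanSpace ℝ (Fin d)) (R : ℝ)
    (p : MvPolynomial (Fin d) ℝ) : (shiftScale x R p).totalDegree ≤ p.totalDegree := by
  refine (totalDegree_bind₁_le (fun i => ?_) p).trans_eq (one_mul _)
  refine (totalDegree_add _ _).trans (max_le (by simp) ?_)
  exact (totalDegree_mul _ _).trans (by simp [totalDegree_X])

theorem memLp_euclideanEval_sub_eval_zero (p : MvPolynomial (Fin d) ℝ) :
    MemLp (fun z => euclideanEval p z - euclideanEval p 0) 2
      (volume.restrict (ball (0 : EuclideanSpace ℝ (Fin d)) 1)) :=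
  ((differentiable_euclideanEval p).continuous.sub continuous_const).memLp_restrict_ball ..

theorem memLp_gradient_euclideanEval (p : MvPolynomial (Fin d) ℝ) :
    MemLp (gradient (euclideanEval p)) 2
      (volume.restrict (ball (0 : EuclideanSpace ℝ (Fin d)) 1)) :=
  (continuous_gradient_euclideanEval p).memLp_restrict_ball ..

noncomputable def oscillationL2 :
    MvPolynomial (Fin d) ℝ →ₗ[ℝ] Lp ℝ 2 (volume.restrict (ball (0 : EuclideanSpace ℝ (Fin d)) 1)) :=
  LinearMap.toLp
    { toFun p z := euclideanEval p z - euclideanEval p 0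
      map_add' p q := by ext z; simp only [map_add, Pi.add_apply]; ring
      map_smul' c p := by
        ext z; simp only [map_smul, Pi.smul_apply, smul_eq_mul, RingHom.id_apply]; ring }
    memLp_euclideanEval_sub_eval_zero

noncomputable def gradientL2 :
    MvPolynomial (Fin d) ℝ →ₗ[ℝ]
      Lp (EuclideanSpace ℝ (Fin d)) 2 (volume.restrict (ball (0 : EuclideanSpace ℝ (Fin d)) 1)) :=
  LinearMap.toLp
    { toFun p := gradient (euclideanEval p)
      map_add' := gradient_euclideanEval_add
      map_smul' := gradient_euclideanEval_smul }
    memLp_gradient_euclideanEval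

theorem oscillationL2_apply (p : MvPolynomial (Fin d) ℝ) :
    oscillationL2 p = (memLp_euclideanEval_sub_eval_zero p).toLp _ := rfl

theorem gradientL2_apply (p : MvPolynomial (Fin d) ℝ) :
    gradientL2 p = (memLp_gradient_euclideanEval p).toLp _ := rfl

theorem norm_oscillationL2_sq (p : MvPolynomial (Fin d) ℝ) :
    ‖oscillationL2 p‖ ^ 2 = ∫ z in ball 0 1, (euclideanEval p z - euclideanEval p 0) ^ 2 := by
  simp only [oscillationL2_apply, MemLp.norm_toLp_two_sq, Real.norm_eq_abs, sq_abs]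

theorem norm_gradientL2_sq (p : MvPolynomial (Fin d) ℝ) :
    ‖gradientL2 p‖ ^ 2 = ∫ z in ball 0 1, ‖gradient (euclideanEval p) z‖ ^ 2 := by
  rw [gradientL2_apply, MemLp.norm_toLp_two_sq]

theorem ker_gradientL2_le_ker_oscillationL2 :
    LinearMap.ker (gradientL2 (d := d)) ≤ LinearMap.ker oscillationL2 := by
  intro p hp
  rw [LinearMap.mem_ker, gradientL2_apply] at hp
  have hae : gradient (euclideanEval p) =ᵐ[volume.restrict (ball 0 1)] 0 := by
    rw [← MemLp.toLp_eq_toLp_iff (memLp_gradient_euclideanEval p) MemLp.zero, hp]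
    exact (MemLp.toLp_zero _).symm
  have hfderiv : (ball (0 : EuclideanSpace ℝ (Fin d)) 1).EqOn (fderiv ℝ (euclideanEval p)) 0 := by
    intro z hz
    have hgrad : gradient (euclideanEval p) z = 0 := Measure.eqOn_open_of_ae_eq hae isOpen_ball
      (continuous_gradient_euclideanEval p).continuousOn continuousOn_const hz
    exact (InnerProductSpace.toDual ℝ _).symm.map_eq_zero_iff.1 hgrad
  have hconst : ∀ z ∈ ball (0 : EuclideanSpace ℝ (Fin d)) 1,
      euclideanEval p z = euclideanEval p 0 := fun z hz =>
    isOpen_ball.is_const_of_fderiv_eq_zero (convex_ball 0 1).isPreconnected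
      (differentiable_euclideanEval p).differentiableOn hfderiv hz (mem_ball_self one_pos)
  rw [LinearMap.mem_ker, oscillationL2_apply, ← MemLp.toLp_zero (MemLp.zero (ε := ℝ) (p := 2)
    (μ := volume.restrict (ball (0 : EuclideanSpace ℝ (Fin d)) 1))), MemLp.toLp_eq_toLp_iff]
  exact ae_restrict_of_forall_mem measurableSet_ball fun z hz => sub_eq_zero.2 (hconst z hz)

theorem exists_poincare_unitBall (d ℓ : ℕ) :
    ∃ C, 0 < C ∧ ∀ p : MvPolynomial (Fin d) ℝ, p.totalDegree ≤ ℓ →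
      ∫ z in ball 0 1, (euclideanEval p z - euclideanEval p 0) ^ 2 ≤
        C * ∫ z in ball 0 1, ‖gradient (euclideanEval p) z‖ ^ 2 := by
  let V := restrictTotalDegree (Fin d) ℝ ℓ
  obtain ⟨C, hC, hle⟩ := LinearMap.exists_norm_le_mul_norm_of_ker_le
    (oscillationL2 ∘ₗ V.subtype) (gradientL2 ∘ₗ V.subtype) fun p hp =>
      ker_gradientL2_le_ker_oscillationL2 hp
  refine ⟨C ^ 2, by positivity, fun p hp => ?_⟩
  rw [← norm_oscillationL2_sq, ← norm_gradientL2_sq, ← mul_pow]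
  exact pow_le_pow_left₀ (norm_nonneg _) (hle ⟨p, (mem_restrictTotalDegree _ _ _).2 hp⟩) 2

theorem exists_poincare_ball (d ℓ : ℕ) :
    ∃ C, 0 < C ∧ ∀ p : MvPolynomial (Fin d) ℝ, p.totalDegree ≤ ℓ →
      ∀ (x : EuclideanSpace ℝ (Fin d)) (R : ℝ), 0 < R →
        ∫ z in ball x R, (euclideanEval p z - euclideanEval p x) ^ 2 ≤
          C * R ^ 2 * ∫ z in ball x R, ‖gradient (euclideanEval p) z‖ ^ 2 := by
  obtain ⟨C, hC, hunit⟩ := exists_poincare_unitBall d ℓ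
  refine ⟨C, hC, fun p hp x R hR => ?_⟩
  have key := hunit (shiftScale x R p) ((totalDegree_shiftScale_le x R p).trans hp)
  have hosc : ∫ u in ball 0 1, (euclideanEval (shiftScale x R p) u -
        euclideanEval (shiftScale x R p) 0) ^ 2 =
      (R ^ d)⁻¹ * ∫ z in ball x R, (euclideanEval p z - euclideanEval p x) ^ 2 := by
    simpa [euclideanEval_shiftScale] using volume.setIntegral_unitBall_comp_add_smul
      (fun z => (euclideanEval p z - euclideanEval p x) ^ 2) x hR
  have hgrad : ∫ u in ball 0 1, ‖gradient (euclideanEval (shiftScale x R p)) u‖ ^ 2 =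
      R ^ 2 * ((R ^ d)⁻¹ * ∫ z in ball x R, ‖gradient (euclideanEval p) z‖ ^ 2) := by
    simp_rw [euclideanEval_shiftScale, gradient_comp_add_smul (differentiable_euclideanEval p _),
      norm_smul, mul_pow, Real.norm_eq_abs, sq_abs]
    rw [integral_const_mul]
    congr 1
    simpa using volume.setIntegral_unitBall_comp_add_smul
      (fun z => ‖gradient (euclideanEval p) z‖ ^ 2) x hR
  rw [hosc, hgrad] at key
  calc ∫ z in ball x R, (euclideanEval p z - euclideanEval p x) ^ 2
      = R ^ d * ((R ^ d)⁻¹ * ∫ z in ball x R, (euclideanEval p z - euclideanEval p x) ^ 2) := by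
        field_simp
    _ ≤ R ^ d * (C * (R ^ 2 * ((R ^ d)⁻¹ *
          ∫ z in ball x R, ‖gradient (euclideanEval p) z‖ ^ 2))) := by gcongr
    _ = C * R ^ 2 * ∫ z in ball x R, ‖gradient (euclideanEval p) z‖ ^ 2 := by
        field_simp

end MvPolynomial

theorem polynomial_discrete_poincare_subball_mean_general
    (d ℓ : ℕ) (θ : ℝ) (hθ : θ ∈ Set.Ioc (0 : ℝ) 1) :
    ∃ C : ℝ, 0 < C ∧
      ∀ (p : MvPolynomial (Fin d) ℝ), p.totalDegree ≤ ℓ →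
        ∀ (x y : EuclideanSpace ℝ (Fin d)) (R ρ : ℝ), 0 < R → 0 < ρ →
          θ * R ≤ ρ → closedBall y ρ ⊆ closedBall x R →
          (∫ z in ball x R,
              (MvPolynomial.eval (fun i => z i) p -
                ⨍ w in ball y ρ, MvPolynomial.eval (fun i => w i) p) ^ 2) ≤
            C * R ^ 2 * ∫ z in ball x R,
              ‖gradient (fun w : EuclideanSpace ℝ (Fin d) =>
                MvPolynomial.eval (fun i => w i) p) z‖ ^ 2 := by
  have hθ0 : 0 < θ := hθ.1
  obtain ⟨C, hC, hpoincare⟩ := exists_poincare_ball d ℓ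
  refine ⟨2 * (1 + (θ ^ d)⁻¹) * C, by positivity, fun p hp x y R ρ hR hρ hθR hsub => ?_⟩
  simp only [← euclideanEval_apply]
  have hball : ball y ρ ⊆ ball x R := by
    simpa only [interior_closedBall _ hρ.ne', interior_closedBall _ hR.ne'] using
      interior_mono hsub
  have hratio : volume.real (ball x R) / volume.real (ball y ρ) ≤ (θ ^ d)⁻¹ := by
    rw [volume.addHaar_real_ball_div_addHaar_real_ball x y hR hρ, finrank_euclideanSpace_fin,
      ← inv_pow]
    gcongr
    rwa [div_le_iff₀ hρ, le_inv_mul_iff₀ hθ0]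
  calc _ ≤ 2 * (1 + volume.real (ball x R) / volume.real (ball y ρ)) *
        ∫ z in ball x R, (euclideanEval p z - euclideanEval p x) ^ 2 :=
        setIntegral_sq_sub_setAverage_le hball (measure_ball_pos volume y hρ).ne'
          measure_ball_lt_top.ne
          ((differentiable_euclideanEval p).continuous.memLp_restrict_ball 2 x R) _
    _ ≤ 2 * (1 + (θ ^ d)⁻¹) *
        (C * R ^ 2 * ∫ z in ball x R, ‖gradient (euclideanEval p) z‖ ^ 2) := by
        gcongr
        exact hpoincare p hp x R hR
    _ = _ := by ring

/-- Discrete Poincaré inequality for polynomials with the mean taken over a sub-ball. -/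
theorem polynomial_discrete_poincare_subball_mean
    (d ℓ : ℕ) (hd : 1 ≤ d) (θ : ℝ) (hθ : θ ∈ Set.Ioc (0 : ℝ) 1) :
    ∃ C : ℝ, 0 < C ∧
      ∀ (p : MvPolynomial (Fin d) ℝ), p.totalDegree ≤ ℓ →
        ∀ (x y : EuclideanSpace ℝ (Fin d)) (R ρ : ℝ), 0 < R → 0 < ρ →
          θ * R ≤ ρ → closedBall y ρ ⊆ closedBall x R →
          (∫ z in ball x R,
              (MvPolynomial.eval (fun i => z i) p -
                ⨍ w in ball y ρ, MvPolynomial.eval (fun i => w i) p) ^ 2) ≤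
            C * R ^ 2 * ∫ z in ball x R,
              ‖gradient (fun w : EuclideanSpace ℝ (Fin d) =>
                MvPolynomial.eval (fun i => w i) p) z‖ ^ 2 :=
  polynomial_discrete_poincare_subball_mean_general d ℓ θ hθ
end
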